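/- Let Q ≠ 0, s > 0 and set β := 9sM² − 8Q². (i) If β > 0 then Λ₋ and Λ₊ are real with Λ₋ < Λ₊, Λ₊ > 0, and the sign of Λ₋ coincides with the sign of Q² − sM² (i.e. Λ₋ > 0 iff Q² > sM², Λ₋ = 0 iff Q² = sM², and Λ₋ < 0 iff Q² < sM²). (ii) If β = 0 then Λ₋ = Λ₊ = 1/(4 s² Q²). -/

import Mathlib

noncomputable section

/-- `Λ₋`, defined for `β := 9sM² − 8Q² ≥ 0`. -/
def Λminus (M Q s : ℝ) : ℝ :=
  1 / (32 * s ^ 2 * Q ^ 6) *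
    (8 * Q ^ 4 - (9 * s * M ^ 2 - 8 * Q ^ 2) * (9 * s * M ^ 2 - 8 * Q ^ 2 + 4 * Q ^ 2)
      - 3 * Real.sqrt (s * M ^ 2 * (9 * s * M ^ 2 - 8 * Q ^ 2) ^ 3))

/-- `Λ₊`, defined for `β := 9sM² − 8Q² ≥ 0`. -/
def Λplus (M Q s : ℝ) : ℝ :=
  1 / (32 * s ^ 2 * Q ^ 6) *
    (8 * Q ^ 4 - (9 * s * M ^ 2 - 8 * Q ^ 2) * (9 * s * M ^ 2 - 8 * Q ^ 2 + 4 * Q ^ 2)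
      + 3 * Real.sqrt (s * M ^ 2 * (9 * s * M ^ 2 - 8 * Q ^ 2) ^ 3))

/-!
Write `Λ± = (A ± R) / (32 s² Q⁶)` with `A = 8Q⁴ − β(β + 4Q²)` and `R = 3√(sM²β³)`.
The whole statement rests on the identity `A² − R² = 576 Q⁶ (Q² − sM²)`.
For `β > 0` we have `R > 0` and `A + R > 0` (if `sM² ≤ Q²` then `β ≤ Q²` makes `A > 0`;
otherwise `A² < R²`, i.e. `|A| < R`), so `A − R = (A² − R²) / (A + R)` has the sign of
`Q² − sM²`. For `β = 0` we have `R = 0` and `A = 8Q⁴`.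
-/

theorem sign_sub_eq_sign_sq_sub {α : Type*} [CommRing α] [LinearOrder α] [IsStrictOrderedRing α]
    {a b : α} (h : 0 < a + b) : SignType.sign (a - b) = SignType.sign (a ^ 2 - b ^ 2) := by
  rw [sq_sub_sq, sign_mul, sign_pos h, one_mul]

theorem add_pos_of_sq_lt_sq {α : Type*} [Ring α] [LinearOrder α] [IsStrictOrderedRing α]
    {a b : α} (hb : 0 ≤ b) (h : a ^ 2 < b ^ 2) : 0 < a + b :=
  neg_lt_iff_pos_add.mp (abs_lt_of_sq_lt_sq' h hb).1

def Λpoly (M Q s : ℝ) : ℝ :=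
  8 * Q ^ 4 - (9 * s * M ^ 2 - 8 * Q ^ 2) * (9 * s * M ^ 2 - 8 * Q ^ 2 + 4 * Q ^ 2)

def Λroot (M Q s : ℝ) : ℝ :=
  3 * Real.sqrt (s * M ^ 2 * (9 * s * M ^ 2 - 8 * Q ^ 2) ^ 3)

section

variable {M Q s : ℝ}

theorem Λminus_eq : Λminus M Q s = 1 / (32 * s ^ 2 * Q ^ 6) * (Λpoly M Q s - Λroot M Q s) :=
  rfl

theorem Λplus_eq : Λplus M Q s = 1 / (32 * s ^ 2 * Q ^ 6) * (Λpoly M Q s + Λroot M Q s) :=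
  rfl

theorem mul_sq_pos_of_nonneg (hQ : Q ≠ 0) (hβ : 0 ≤ 9 * s * M ^ 2 - 8 * Q ^ 2) :
    0 < s * M ^ 2 := by
  have : 0 < Q ^ 2 := by positivity
  linarith

theorem Λscale_pos (hQ : Q ≠ 0) (hβ : 0 ≤ 9 * s * M ^ 2 - 8 * Q ^ 2) :
    0 < 1 / (32 * s ^ 2 * Q ^ 6) := by
  have hs : s ≠ 0 := left_ne_zero_of_mul (mul_sq_pos_of_nonneg hQ hβ).ne'
  positivity

theorem Λroot_pos (hQ : Q ≠ 0) (hβ : 0 < 9 * s * M ^ 2 - 8 * Q ^ 2) : 0 < Λroot M Q s := by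
  have := mul_sq_pos_of_nonneg hQ hβ.le
  unfold Λroot
  positivity

theorem Λpoly_sq_sub_Λroot_sq (hQ : Q ≠ 0) (hβ : 0 ≤ 9 * s * M ^ 2 - 8 * Q ^ 2) :
    Λpoly M Q s ^ 2 - Λroot M Q s ^ 2 = 576 * Q ^ 6 * (Q ^ 2 - s * M ^ 2) := by
  have := mul_sq_pos_of_nonneg hQ hβ
  rw [Λroot, mul_pow, Real.sq_sqrt (by positivity), Λpoly]
  ring

theorem Λpoly_add_Λroot_pos (hQ : Q ≠ 0) (hβ : 0 < 9 * s * M ^ 2 - 8 * Q ^ 2) :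
    0 < Λpoly M Q s + Λroot M Q s := by
  have hR := Λroot_pos hQ hβ
  have hQ2 : 0 < Q ^ 2 := by positivity
  rcases le_or_gt (s * M ^ 2) (Q ^ 2) with h | h
  · have hA : 0 < Λpoly M Q s := by
      have : 9 * s * M ^ 2 - 8 * Q ^ 2 ≤ Q ^ 2 := by linarith
      unfold Λpoly
      nlinarith
    linarith
  · refine add_pos_of_sq_lt_sq hR.le (sub_neg.mp ?_)
    rw [Λpoly_sq_sub_Λroot_sq hQ hβ.le]
    exact mul_neg_of_pos_of_neg (by positivity) (by linarith)

theorem sign_Λminus (hQ : Q ≠ 0) (hβ : 0 < 9 * s * M ^ 2 - 8 * Q ^ 2) :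
    SignType.sign (Λminus M Q s) = SignType.sign (Q ^ 2 - s * M ^ 2) := by
  rw [Λminus_eq, sign_mul, sign_pos (Λscale_pos hQ hβ.le), one_mul,
    sign_sub_eq_sign_sq_sub (Λpoly_add_Λroot_pos hQ hβ), Λpoly_sq_sub_Λroot_sq hQ hβ.le,
    sign_mul, sign_pos (by positivity : (0 : ℝ) < 576 * Q ^ 6), one_mul]

theorem Λminus_lt_Λplus (hQ : Q ≠ 0) (hβ : 0 < 9 * s * M ^ 2 - 8 * Q ^ 2) :
    Λminus M Q s < Λplus M Q s := by
  rw [Λminus_eq, Λplus_eq]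
  have := Λroot_pos hQ hβ
  exact mul_lt_mul_of_pos_left (by linarith) (Λscale_pos hQ hβ.le)

theorem Λplus_pos (hQ : Q ≠ 0) (hβ : 0 < 9 * s * M ^ 2 - 8 * Q ^ 2) : 0 < Λplus M Q s :=
  Λplus_eq ▸ mul_pos (Λscale_pos hQ hβ.le) (Λpoly_add_Λroot_pos hQ hβ)

theorem Λpoly_of_eq_zero (hβ : 9 * s * M ^ 2 - 8 * Q ^ 2 = 0) : Λpoly M Q s = 8 * Q ^ 4 := by
  rw [Λpoly, hβ]
  ring

theorem Λroot_of_eq_zero (hβ : 9 * s * M ^ 2 - 8 * Q ^ 2 = 0) : Λroot M Q s = 0 := by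
  rw [Λroot, hβ]
  simp

theorem Λscale_mul_of_eq_zero (hQ : Q ≠ 0) (hβ : 9 * s * M ^ 2 - 8 * Q ^ 2 = 0) :
    1 / (32 * s ^ 2 * Q ^ 6) * (8 * Q ^ 4) = 1 / (4 * s ^ 2 * Q ^ 2) := by
  have hs : s ≠ 0 := left_ne_zero_of_mul (mul_sq_pos_of_nonneg hQ hβ.ge).ne'
  field_simp
  ring

end

theorem Lambda_pm_properties_general (M Q s : ℝ) (hQ : Q ≠ 0) :
    ((0 < 9 * s * M ^ 2 - 8 * Q ^ 2) →
      Λminus M Q s < Λplus M Q s ∧ 0 < Λplus M Q s ∧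
      (0 < Λminus M Q s ↔ s * M ^ 2 < Q ^ 2) ∧
      (Λminus M Q s = 0 ↔ s * M ^ 2 = Q ^ 2) ∧
      (Λminus M Q s < 0 ↔ Q ^ 2 < s * M ^ 2)) ∧
    ((9 * s * M ^ 2 - 8 * Q ^ 2 = 0) →
      Λminus M Q s = 1 / (4 * s ^ 2 * Q ^ 2) ∧
      Λplus M Q s = 1 / (4 * s ^ 2 * Q ^ 2)) := by
  refine ⟨fun hβ => ?_, fun hβ => ?_⟩
  · have hsign := sign_Λminus hQ hβ
    refine ⟨Λminus_lt_Λplus hQ hβ, Λplus_pos hQ hβ, ?_, ?_, ?_⟩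
    · rw [← sign_eq_one_iff, hsign, sign_eq_one_iff, sub_pos]
    · rw [← sign_eq_zero_iff, hsign, sign_eq_zero_iff, sub_eq_zero, eq_comm]
    · rw [← sign_eq_neg_one_iff, hsign, sign_eq_neg_one_iff, sub_neg]
  · rw [Λminus_eq, Λplus_eq, Λpoly_of_eq_zero hβ, Λroot_of_eq_zero hβ, sub_zero, add_zero,
      Λscale_mul_of_eq_zero hQ hβ]
    exact ⟨rfl, rfl⟩

/-- Basic properties of `Λ₋` and `Λ₊` in terms of `β = 9sM² − 8Q²`. -/
theorem Lambda_pm_properties (M Q s : ℝ) (hQ : Q ≠ 0) (hs : 0 < s) :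
    ((0 < 9 * s * M ^ 2 - 8 * Q ^ 2) →
      Λminus M Q s < Λplus M Q s ∧ 0 < Λplus M Q s ∧
      (0 < Λminus M Q s ↔ s * M ^ 2 < Q ^ 2) ∧
      (Λminus M Q s = 0 ↔ s * M ^ 2 = Q ^ 2) ∧
      (Λminus M Q s < 0 ↔ Q ^ 2 < s * M ^ 2)) ∧
    ((9 * s * M ^ 2 - 8 * Q ^ 2 = 0) →
      Λminus M Q s = 1 / (4 * s ^ 2 * Q ^ 2) ∧
      Λplus M Q s = 1 / (4 * s ^ 2 * Q ^ 2)) :=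
  Lambda_pm_properties_general M Q s hQ
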